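/- arXiv:2206.13896 — 5 statements merged into one kernel-verified Lean document; each statement's English description precedes it below -/
import Mathlib

section
/- Let Γ = {b_1,…,b_m}, Σ = Γ ∪ {#} with # ∉ Γ, and k ≥ 1. Let gc be the (k-1)-tuple of length constraints all equal to (m-1, 3m-1). Fix sets W_1,…,W_k ⊆ Γ with non-empty string representations w_j (|w_j| = |W_j| ≤ m, letters of w_j exactly W_j), and define S = w_1 #^{m-1} w_2 #^{m-1} ⋯ #^{m-1} w_k. Then the set of gc-subsequences of S that contain no occurrence of # equals W_1 · W_2 ⋯ W_k (i.e., exactly the strings u ∈ Γ^k with u[j] ∈ W_j for all j). -/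
/-- `p` is a subsequence of `v` via an embedding whose `i`-th gap length lies between
`lo i` and `hi i`. -/
def IsLenSubseq {α : Type*} (v p : List α) (lo hi : ℕ → ℕ) : Prop :=
  ∃ e : ℕ → ℕ,
    (∀ i j, i < j → j < p.length → e i < e j) ∧
    (∀ i, i < p.length → e i < v.length) ∧
    (∀ i, i < p.length → v[e i]? = p[i]?) ∧
    (∀ i, i + 1 < p.length →
      lo i ≤ e (i + 1) - (e i + 1) ∧ e (i + 1) - (e i + 1) ≤ hi i)

/-!
A letter of `S` lies in exactly one block `w_j`, and two letters of the same block are less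
than `m - 1` apart, while every gap allowed by `gc` is at least `m - 1`. So the `i`-th letter
of a `#`-free gc-subsequence of length `k` comes from a block strictly to the right of the
block of the `(i-1)`-th; with only `k` blocks the `i`-th letter must come from `w_i`.
Conversely, picking one letter from each block gives gaps between `m - 1` and `3m - 3`.
-/

section Intercalate

variable {α : Type*} (sep : List α)

def intercalateStart (L : List (List α)) (j : ℕ) : ℕ :=
  ((L.take j).map fun b => b.length + sep.length).sum

@[simp]
lemma intercalateStart_zero (L : List (List α)) : intercalateStart sep L 0 = 0 := by
  simp [intercalateStart]

@[simp]
lemma intercalateStart_cons_succ (a : List α) (L : List (List α)) (j : ℕ) :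
    intercalateStart sep (a :: L) (j + 1) = a.length + sep.length + intercalateStart sep L j := by
  simp [intercalateStart]

lemma intercalateStart_succ {L : List (List α)} {j : ℕ} (hj : j < L.length) :
    intercalateStart sep L (j + 1) = intercalateStart sep L j + L[j].length + sep.length := by
  simp only [intercalateStart, List.take_add_one, List.getElem?_eq_getElem hj, Option.toList_some,
    List.map_append, List.map_singleton, List.sum_append, List.sum_singleton, Nat.add_assoc]

lemma intercalateStart_mono (L : List (List α)) : Monotone (intercalateStart sep L) :=
  fun _ _ hij =>
    ((List.take_prefix_take_left hij).map _).sublist.sum_le_sum fun _ _ => Nat.zero_le _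

variable {sep}

lemma getElem?_intercalate_intercalateStart_add :
    ∀ {L : List (List α)} {j t : ℕ} (hj : j < L.length) (ht : t < L[j].length),
      (sep.intercalate L)[intercalateStart sep L j + t]? = some L[j][t]
  | [_], 0, _, _, _ => by simp
  | a :: b :: L, 0, t, _, ht => by
    simp only [List.getElem_cons_zero] at ht
    simp [List.intercalate_cons_cons, List.getElem?_append_left ht]
  | a :: b :: L, j + 1, t, hj, ht => by
    have ih := getElem?_intercalate_intercalateStart_add (L := b :: L) (by simpa using hj) ht
    rw [List.intercalate_cons_cons, intercalateStart_cons_succ, Nat.add_assoc,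
      ← List.length_append, List.getElem?_append_right (by omega)]
    simpa using ih

lemma exists_intercalateStart_of_getElem?_intercalate {x : α} (hx : x ∉ sep) :
    ∀ {L : List (List α)} {q : ℕ}, (sep.intercalate L)[q]? = some x →
      ∃ j, ∃ hj : j < L.length, ∃ t, ∃ ht : t < L[j].length,
        q = intercalateStart sep L j + t ∧ L[j][t] = x
  | [], q, h => by simp at h
  | [a], q, h => by
    obtain ⟨hq, rfl⟩ := List.getElem?_eq_some_iff.1 (by simpa using h)
    exact ⟨0, by simp, q, hq, by simp, rfl⟩
  | a :: b :: L, q, h => by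
    rw [List.intercalate_cons_cons, List.append_assoc] at h
    by_cases hqa : q < a.length
    · rw [List.getElem?_append_left hqa] at h
      obtain ⟨hq, rfl⟩ := List.getElem?_eq_some_iff.1 h
      exact ⟨0, by simp, q, hq, by simp, rfl⟩
    rw [List.getElem?_append_right (by omega)] at h
    by_cases hqs : q - a.length < sep.length
    · rw [List.getElem?_append_left hqs] at h
      exact absurd (List.mem_of_getElem? h) hx
    rw [List.getElem?_append_right (by omega)] at h
    obtain ⟨j, hj, t, ht, hq, hjt⟩ := exists_intercalateStart_of_getElem?_intercalate hx h
    exact ⟨j + 1, by simpa using hj, t, ht, by simp; omega, hjt⟩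

lemma lt_of_intercalateStart_add_lt {L : List (List α)} {j j' t t' : ℕ} (hj : j < L.length)
    (hj' : j' < L.length) (hlen : L[j].length ≤ sep.length + 1) (ht : t < L[j].length)
    (ht' : t' < L[j'].length)
    (h : intercalateStart sep L j + t + sep.length < intercalateStart sep L j' + t') : j < j' := by
  by_contra! hle
  obtain hlt | rfl := hle.lt_or_eq
  · have := intercalateStart_succ sep hj'
    have := intercalateStart_mono sep L (show j' + 1 ≤ j by omega)
    omega
  · omega

end Intercalate

section IsLenSubseq

variable {α : Type*} {sep p : List α} {L : List (List α)} {lo hi : ℕ → ℕ}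

lemma getElem_mem_of_isLenSubseq_intercalate (h : IsLenSubseq (sep.intercalate L) p lo hi)
    (hp : p.length = L.length) (hlo : ∀ i, sep.length ≤ lo i)
    (hL : ∀ b ∈ L, b.length ≤ sep.length + 1) (hsep : ∀ x ∈ p, x ∉ sep) (i : ℕ)
    (hip : i < p.length) : p[i] ∈ L[i] := by
  obtain ⟨e, he_mono, -, he_get, he_gap⟩ := h
  have hgap : ∀ i i', i < i' → i' < p.length → e i + sep.length < e i' := by
    intro i i' hii' hi'
    have := (he_gap i (by omega)).1
    have := hlo i
    have := he_mono i (i + 1) (by omega) (by omega)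
    have : e (i + 1) ≤ e i' := by
      obtain hlt | heq := (show i + 1 ≤ i' by omega).lt_or_eq
      · exact (he_mono _ _ hlt hi').le
      · rw [heq]
    omega
  have hblock : ∀ i : Fin p.length, ∃ j : Fin p.length,
      ∃ t, ∃ ht : t < (L[(j : ℕ)]'(hp ▸ j.2)).length,
        e i = intercalateStart sep L j + t ∧ L[(j : ℕ)][t] = p[(i : ℕ)] := by
    intro i
    obtain ⟨j, hj, t, ht, hq, hjt⟩ := exists_intercalateStart_of_getElem?_intercalate
      (hsep _ (List.getElem_mem i.2)) ((he_get i i.2).trans (List.getElem?_eq_getElem i.2))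
    exact ⟨⟨j, hp ▸ hj⟩, t, ht, hq, hjt⟩
  choose J T hT he hJT using hblock
  have hJ_mono : StrictMono J := by
    intro i i' hii'
    have := hgap i i' hii' i'.2
    exact lt_of_intercalateStart_add_lt (hp ▸ (J i).2) (hp ▸ (J i').2)
      (hL _ (List.getElem_mem _)) (hT i) (hT i') (by rw [← he i, ← he i']; exact this)
  have hJi : (J ⟨i, hip⟩ : ℕ) = i := congrArg Fin.val hJ_mono.apply_eq
  rw [← hJT ⟨i, hip⟩]
  convert List.getElem_mem (hT ⟨i, hip⟩) using 2
  exact hJi.symm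

lemma isLenSubseq_intercalate_of_forall_getElem_mem {B : ℕ} (hp : p.length = L.length)
    (hmem : ∀ i (hi : i < p.length), p[i] ∈ L[i]) (hlo : ∀ i, lo i ≤ sep.length)
    (hL : ∀ b ∈ L, b.length ≤ B) (hhi : ∀ i, sep.length + 2 * (B - 1) ≤ hi i) :
    IsLenSubseq (sep.intercalate L) p lo hi := by
  have hpos : ∀ i, ∃ t, ∀ hi : i < p.length,
      ∃ ht : t < (L[i]'(hp ▸ hi)).length, L[i][t] = p[i] := by
    intro i
    by_cases hi : i < p.length
    · obtain ⟨t, ht, hti⟩ := List.mem_iff_getElem.1 (hmem i hi)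
      exact ⟨t, fun _ => ⟨ht, hti⟩⟩
    · exact ⟨0, fun h => absurd h hi⟩
  choose t ht htp using hpos
  have hget : ∀ i (hi : i < p.length),
      (sep.intercalate L)[intercalateStart sep L i + t i]? = some p[i] := fun i hi => by
    rw [getElem?_intercalate_intercalateStart_add (hp ▸ hi) (ht i hi), htp]
  have hstart : ∀ i (hi : i < p.length), intercalateStart sep L (i + 1) =
      intercalateStart sep L i + (L[i]'(hp ▸ hi)).length + sep.length :=
    fun i hi => intercalateStart_succ sep (hp ▸ hi)
  refine ⟨fun i => intercalateStart sep L i + t i, ?_, ?_, ?_, ?_⟩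
  · intro i j hij hj
    beta_reduce
    have := ht i (by omega)
    have := hstart i (by omega)
    have := intercalateStart_mono sep L (show i + 1 ≤ j by omega)
    omega
  · exact fun i hi => (List.getElem?_eq_some_iff.1 (hget i hi)).1
  · exact fun i hi => by rw [hget i hi, List.getElem?_eq_getElem hi]
  · intro i hi
    beta_reduce
    have := ht i (by omega)
    have := ht (i + 1) hi
    have := hstart i (by omega)
    have := hL _ (List.getElem_mem (hp ▸ (show i < p.length by omega)))
    have := hL _ (List.getElem_mem (hp ▸ hi))
    have := hlo i
    have := hhi i
    constructor <;> omega

end IsLenSubseq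

lemma exists_eq_ofFn_of_forall_getElem_mem_map {α β : Type*} {k : ℕ} {f : α → β}
    {A : Fin k → List α} {p : List β} (hp : p.length = k)
    (hmem : ∀ j : Fin k, p[(j : ℕ)] ∈ (A j).map f) :
    ∃ u : Fin k → α, p = List.ofFn (fun j => f (u j)) ∧ ∀ j, u j ∈ A j := by
  choose u hu hpu using fun j => List.mem_map.1 (hmem j)
  exact ⟨u, List.ext_getElem (by simp [hp]) fun i _ _ => by simp [hpu], hu⟩

theorem stmt7_general {Γ : Type*} [Fintype Γ] [DecidableEq Γ] (k : ℕ)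
    (W : Fin k → Finset Γ)
    (ws : Fin k → List Γ) (hnd : ∀ j, (ws j).Nodup)
    (hset : ∀ j, (ws j).toFinset = W j) :
    {p : List (Option Γ) | p.length = k ∧
        IsLenSubseq
          (List.intercalate (List.replicate (Fintype.card Γ - 1) (none : Option Γ))
            (List.ofFn fun j : Fin k => (ws j).map some))
          p (fun _ => Fintype.card Γ - 1) (fun _ => 3 * Fintype.card Γ - 1) ∧
        (none : Option Γ) ∉ p} =
      {p : List (Option Γ) | ∃ u : Fin k → Γ,
        p = List.ofFn (fun j => some (u j)) ∧ ∀ j, u j ∈ W j} := by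
  have hmemW : ∀ j a, a ∈ ws j ↔ a ∈ W j := fun j a => by rw [← hset j, List.mem_toFinset]
  have hlen :
      ∀ b ∈ List.ofFn (fun j : Fin k => (ws j).map some), b.length ≤ Fintype.card Γ := by
    simpa [List.mem_ofFn] using fun j => (hnd j).length_le_card
  ext p
  constructor
  · rintro ⟨hp, hsub, hnone⟩
    have hmem := getElem_mem_of_isLenSubseq_intercalate hsub (by simp [hp]) (fun _ => by simp)
      (fun b hb => (hlen b hb).trans (by simp; omega))
      (fun x hx hsep => hnone (List.eq_of_mem_replicate hsep ▸ hx))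
    obtain ⟨u, rfl, hu⟩ := exists_eq_ofFn_of_forall_getElem_mem_map hp
      fun j => by simpa using hmem j (by simp [hp])
    exact ⟨u, rfl, fun j => (hmemW j _).1 (hu j)⟩
  · rintro ⟨u, rfl, hu⟩
    refine ⟨by simp, isLenSubseq_intercalate_of_forall_getElem_mem (by simp)
      (fun i hi => by simpa [hmemW] using hu ⟨i, by simpa using hi⟩) (fun _ => by simp) hlen
      (fun _ => by simp; omega), by simp [List.mem_ofFn]⟩

/-- The alphabet Σ = Γ ∪ {#} is modelled as `Option Γ`, with `#` being `none`.
For `S = w_1 #^{m-1} w_2 #^{m-1} ⋯ #^{m-1} w_k` (where `w_j` is a duplicate-free string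
representation of `W_j ⊆ Γ` and `m = |Γ|`), with all length constraints `(m-1, 3m-1)`,
the gc-subsequences of `S` of length `k` containing no `#` are exactly the strings of
`W_1 · W_2 ⋯ W_k`. -/
theorem stmt7 {Γ : Type*} [Fintype Γ] [DecidableEq Γ] (k : ℕ) (hk : 1 ≤ k)
    (W : Fin k → Finset Γ) (hW : ∀ j, (W j).Nonempty)
    (ws : Fin k → List Γ) (hnd : ∀ j, (ws j).Nodup)
    (hset : ∀ j, (ws j).toFinset = W j) :
    {p : List (Option Γ) | p.length = k ∧
        IsLenSubseq
          (List.intercalate (List.replicate (Fintype.card Γ - 1) (none : Option Γ))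
            (List.ofFn fun j : Fin k => (ws j).map some))
          p (fun _ => Fintype.card Γ - 1) (fun _ => 3 * Fintype.card Γ - 1) ∧
        (none : Option Γ) ∉ p} =
      {p : List (Option Γ) | ∃ u : Fin k → Γ,
        p = List.ofFn (fun j => some (u j)) ∧ ∀ j, u j ∈ W j} :=
  stmt7_general k W ws hnd hset
end

section
/- Let Γ = {b_1,…,b_m}, Σ = Γ ∪ {#}, k ≥ 1, and gc the (k-1)-tuple of length constraints all equal to (m-1, 3m-1). For i ∈ [k] define T_i = T_{i,1} T_{i,2} ⋯ T_{i,k} where T_{i,j} = b_1 b_2 ⋯ b_m #^m for j ≠ i and T_{i,i} = #^m. Define T = T_1 #^{3m} T_2 #^{3m} ⋯ #^{3m} T_k. Then the set of gc-subsequences of T equals {p ∈ Σ^k : p contains at least one occurrence of #}. -/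
namespace S8

variable {α : Type*}

lemma icat (sep : List α) : ∀ (l : List (List α)), l ≠ [] →
    List.intercalate sep l ++ sep = (l.map (· ++ sep)).flatten := by
  intro l
  induction l with
  | nil => simp
  | cons x xs ih =>
    intro _
    cases xs with
    | nil => simp [List.intercalate]
    | cons y ys =>
      have := ih (by simp)
      simp only [List.intercalate] at this ⊢
      simp only [List.intersperse_cons_cons, List.flatten_cons, List.map_cons] at this ⊢
      rw [← this]; simp

lemma flat_len (P : ℕ) : ∀ (l : List (List α)), (∀ x ∈ l, x.length = P) →
    l.flatten.length = l.length * P := by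
  intro l
  induction l with
  | nil => simp
  | cons x xs ih =>
    intro h
    simp only [List.flatten_cons, List.length_append, List.length_cons,
      ih (fun y hy => h y (by simp [hy])), h x (by simp)]
    ring

lemma flat_get (P : ℕ) : ∀ (l : List (List α)) (q r : ℕ), (∀ x ∈ l, x.length = P) →
    (hq : q < l.length) → r < P →
    l.flatten[q * P + r]? = (l[q]'hq)[r]? := by
  intro l
  induction l with
  | nil => simp
  | cons x xs ih =>
    intro q r h hq hr
    cases q with
    | zero =>
      simp only [Nat.zero_mul, Nat.zero_add, List.flatten_cons]
      rw [List.getElem?_append, if_pos (by rw [h x (by simp)]; exact hr)]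
      simp
    | succ q =>
      have hx : x.length = P := h x (by simp)
      simp only [List.flatten_cons]
      rw [List.getElem?_append_right (by rw [hx]; nlinarith [Nat.zero_le (q*P)])]
      have : (q + 1) * P + r - x.length = q * P + r := by rw [hx]; ring_nf; omega
      rw [this, ih q r (fun y hy => h y (by simp [hy])) (by simpa using hq) hr]
      simp

lemma ofFn_ite (A D : List α) : ∀ (k i : ℕ), i < k →
    (List.ofFn fun j : Fin k => if (j : ℕ) = i then A else D) =
      List.replicate i D ++ A :: List.replicate (k - 1 - i) D := by
  intro k
  induction k with
  | zero => omega
  | succ k ih =>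
    intro i hi
    rw [List.ofFn_succ]
    cases i with
    | zero =>
      have h1 : (fun j : Fin k => if ((j.succ : Fin (k+1)) : ℕ) = 0 then A else D)
          = fun _ : Fin k => D := by funext j; simp
      have h2 : k + 1 - 1 - 0 = k := by omega
      simp only [Fin.val_zero, if_pos rfl, h1, List.ofFn_const, h2,
        List.replicate_zero, List.nil_append, if_true]
    | succ i =>
      have h1 : (fun j : Fin k => if ((j.succ : Fin (k+1)) : ℕ) = i + 1 then A else D)
          = fun j : Fin k => if (j : ℕ) = i then A else D := by
        funext j; simp
      have h2 : k + 1 - 1 - (i + 1) = k - 1 - i := by omega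
      rw [Fin.val_zero, if_neg (by omega), h1, ih i (by omega), h2, List.replicate_succ]
      simp

def Dl (m : ℕ) : List (Option (Fin m)) := ((List.finRange m).map some) ++ List.replicate m none
def El (m : ℕ) : List (Option (Fin m)) := List.replicate m none ++ ((List.finRange m).map some)

lemma Dl_len (m : ℕ) : (Dl m).length = 2 * m := by simp [Dl]; ring
lemma El_len (m : ℕ) : (El m).length = 2 * m := by simp [El]; ring

lemma Dl_get (m j : ℕ) (hj : j < 2 * m) :
    (Dl m)[j]? = some (if h : j < m then some ⟨j, h⟩ else none) := by
  rw [Dl, List.getElem?_append]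
  split
  · rename_i h
    simp only [List.length_map, List.length_finRange] at h
    rw [dif_pos h, List.getElem?_map]
    rw [List.getElem?_eq_getElem (by simpa using h), List.getElem_finRange]
    simp
  · rename_i h
    simp only [List.length_map, List.length_finRange] at h
    rw [dif_neg h, List.getElem?_replicate, if_pos (by simp; omega)]

lemma El_get (m j : ℕ) (hj : j < 2 * m) :
    (El m)[j]? = some (if h : j < m then none else some ⟨j - m, by omega⟩) := by
  rw [El, List.getElem?_append]
  simp only [List.length_replicate]
  split
  · rename_i h
    rw [List.getElem?_replicate, if_pos h]
  · rename_i h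
    rw [List.getElem?_map]
    rw [List.getElem?_eq_getElem (by simp; omega), List.getElem_finRange]
    simp

lemma shiftE (m : ℕ) : ∀ n : ℕ,
    List.replicate m (none : Option (Fin m)) ++
      ((List.replicate n (Dl m)).flatten ++ List.replicate (3 * m) none) =
    (List.replicate n (El m)).flatten ++ List.replicate (4 * m) none := by
  intro n
  induction n with
  | zero =>
    simp only [List.replicate_zero, List.flatten_nil, List.nil_append]
    rw [← List.replicate_add]
    congr 1
    omega
  | succ n ih =>
    conv_rhs => rw [List.replicate_succ, List.flatten_cons, List.append_assoc, ← ih]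
    simp [Dl, El, List.replicate_succ, List.flatten_cons, List.append_assoc]

def Pm (m k : ℕ) : ℕ := 2 * m * (k - 1) + 4 * m

def Bl (m k q : ℕ) : List (Option (Fin m)) :=
  (List.replicate q (Dl m)).flatten ++
    ((List.replicate (k - 1 - q) (El m)).flatten ++ List.replicate (4 * m) none)

lemma repD_mem (m q : ℕ) : ∀ x ∈ List.replicate q (Dl m), x.length = 2 * m :=
  fun x hx => by rw [List.eq_of_mem_replicate hx]; exact Dl_len m

lemma repE_mem (m q : ℕ) : ∀ x ∈ List.replicate q (El m), x.length = 2 * m :=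
  fun x hx => by rw [List.eq_of_mem_replicate hx]; exact El_len m

lemma mul2m_mono (m a b : ℕ) (h : a ≤ b) : 2 * m * a ≤ 2 * m * b :=
  Nat.mul_le_mul_left _ h

lemma Bl_len (m k q : ℕ) (hq : q < k) : (Bl m k q).length = Pm m k := by
  have e2 : q * (2 * m) + (k - 1 - q) * (2 * m) = (k - 1) * (2 * m) := by
    rw [← Nat.add_mul]; congr 1; omega
  have e3 : (k - 1) * (2 * m) = 2 * m * (k - 1) := Nat.mul_comm _ _
  simp only [Bl, List.length_append, flat_len (2 * m) _ (repD_mem m q),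
    flat_len (2 * m) _ (repE_mem m (k - 1 - q)), List.length_replicate, Pm]
  omega

def Tm (m k : ℕ) : List (Option (Fin m)) :=
  List.intercalate (List.replicate (3 * m) (none : Option (Fin m)))
    (List.ofFn fun i : Fin k =>
      (List.ofFn fun j : Fin k =>
        if j = i then List.replicate m (none : Option (Fin m))
        else ((List.finRange m).map some) ++ List.replicate m none).flatten)

lemma T_eq (m k : ℕ) (hk : 1 ≤ k) :
    Tm m k ++ List.replicate (3 * m) none =
      (List.ofFn fun q : Fin k => Bl m k (q : ℕ)).flatten := by
  rw [Tm, icat _ _ (by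
    intro h
    have := congrArg List.length h
    simp at this
    omega)]
  rw [List.map_ofFn]
  refine congrArg _ (congrArg _ (funext fun i => ?_))
  simp only [Function.comp]
  have hc : (fun j : Fin k => if j = i then List.replicate m (none : Option (Fin m))
      else ((List.finRange m).map some) ++ List.replicate m none)
      = (fun j : Fin k => if (j : ℕ) = (i : ℕ) then List.replicate m none else Dl m) := by
    funext j; simp [Dl, Fin.ext_iff]
  rw [hc, ofFn_ite _ _ k i.val i.isLt, List.flatten_append, List.flatten_cons,
    List.append_assoc, List.append_assoc, shiftE]
  rfl

def FcBody (m k : ℕ) (hm : 0 < m) (q r : ℕ) : Option (Fin m) :=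
  if r < 2 * m * (k - 1) then
    if hlt : r % (2 * m) < m then
      (if r < 2 * m * q then some ⟨r % (2 * m), hlt⟩ else none)
    else
      (if r < 2 * m * q then none else some ⟨r % (2 * m) - m, by
        have h2 := Nat.mod_lt r (show 0 < 2 * m by omega); omega⟩)
  else none

def Fc (m k : ℕ) (hm : 0 < m) (x : ℕ) : Option (Fin m) :=
  FcBody m k hm (x / Pm m k) (x % Pm m k)

lemma Bl_get (m k : ℕ) (hm : 0 < m) (q r : ℕ) (hqk : q < k) (hr : r < Pm m k) :
    (Bl m k q)[r]? = some (FcBody m k hm q r) := by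
  have h2m : 0 < 2 * m := by omega
  have hPv : Pm m k = 2 * m * (k - 1) + 4 * m := rfl
  have lenD : (List.replicate q (Dl m)).flatten.length = q * (2 * m) := by
    rw [flat_len (2 * m) _ (repD_mem m q), List.length_replicate]
  have lenE : (List.replicate (k - 1 - q) (El m)).flatten.length = (k - 1 - q) * (2 * m) := by
    rw [flat_len (2 * m) _ (repE_mem m _), List.length_replicate]
  have e2 : q * (2 * m) + (k - 1 - q) * (2 * m) = (k - 1) * (2 * m) := by
    rw [← Nat.add_mul]; congr 1; omega
  have e3 : (k - 1) * (2 * m) = 2 * m * (k - 1) := Nat.mul_comm _ _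
  have e4 : q * (2 * m) = 2 * m * q := by ring
  have e5 : 2 * m * q ≤ 2 * m * (k - 1) := mul2m_mono m _ _ (by omega)
  rw [Bl, List.getElem?_append]
  by_cases hc1 : r < 2 * m * q
  · rw [if_pos (by omega)]
    have hdiv : r / (2 * m) < q := by rw [Nat.div_lt_iff_lt_mul h2m]; omega
    have hmod : r % (2 * m) < 2 * m := Nat.mod_lt _ h2m
    have hsplit : r = (r / (2 * m)) * (2 * m) + r % (2 * m) := by
      have h := Nat.div_add_mod r (2 * m)
      have hco : 2 * m * (r / (2 * m)) = (r / (2 * m)) * (2 * m) := Nat.mul_comm _ _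
      omega
    conv_lhs => rw [hsplit]
    rw [flat_get (2 * m) _ _ _ (repD_mem m q) (by simpa using hdiv) hmod,
      List.getElem_replicate, Dl_get m _ hmod]
    rw [FcBody, if_pos (by omega)]
    by_cases hlt : r % (2 * m) < m
    · rw [dif_pos hlt, dif_pos hlt, if_pos hc1]
    · rw [dif_neg hlt, dif_neg hlt, if_pos hc1]
  · rw [if_neg (by omega), lenD]
    rw [List.getElem?_append]
    by_cases hc2 : r < 2 * m * (k - 1)
    · rw [if_pos (by rw [lenE]; omega)]
      have hdiv2 : (r - q * (2 * m)) / (2 * m) < k - 1 - q := by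
        rw [Nat.div_lt_iff_lt_mul h2m]; omega
      have hmod2 : (r - q * (2 * m)) % (2 * m) < 2 * m := Nat.mod_lt _ h2m
      have hsplit2 : r - q * (2 * m) =
          ((r - q * (2 * m)) / (2 * m)) * (2 * m) + (r - q * (2 * m)) % (2 * m) := by
        have h := Nat.div_add_mod (r - q * (2 * m)) (2 * m)
        have hco : 2 * m * ((r - q * (2 * m)) / (2 * m))
            = ((r - q * (2 * m)) / (2 * m)) * (2 * m) := Nat.mul_comm _ _
        omega
      conv_lhs => rw [hsplit2]
      rw [flat_get (2 * m) _ _ _ (repE_mem m _) (by simpa using hdiv2) hmod2,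
        List.getElem_replicate, El_get m _ hmod2]
      have hmodeq : (r - q * (2 * m)) % (2 * m) = r % (2 * m) := by
        have h' : r = 2 * m * q + (r - q * (2 * m)) := by omega
        calc (r - q * (2 * m)) % (2 * m)
            = (2 * m * q + (r - q * (2 * m))) % (2 * m) := (Nat.mul_add_mod _ _ _).symm
          _ = r % (2 * m) := by rw [← h']
      rw [FcBody, if_pos hc2]
      simp only [hmodeq]
      by_cases hlt : r % (2 * m) < m
      · rw [dif_pos hlt, dif_pos hlt, if_neg hc1]
      · rw [dif_neg hlt, dif_neg hlt, if_neg hc1]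
    · rw [if_neg (by rw [lenE]; omega), lenE]
      rw [List.getElem?_replicate, if_pos (by omega)]
      rw [FcBody, if_neg hc2]

lemma T_len (m k : ℕ) :
    ((List.ofFn fun q : Fin k => Bl m k (q : ℕ)).flatten).length = k * Pm m k := by
  have hmem : ∀ l ∈ List.ofFn (fun q : Fin k => Bl m k (q : ℕ)), l.length = Pm m k := by
    intro l hl
    rw [List.mem_ofFn] at hl
    obtain ⟨i, rfl⟩ := hl
    exact Bl_len m k i i.isLt
  rw [flat_len (Pm m k) _ hmem]
  simp

lemma T_get (m k : ℕ) (hm : 0 < m) (x : ℕ) (hx : x < k * Pm m k) :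
    ((List.ofFn fun q : Fin k => Bl m k (q : ℕ)).flatten)[x]? = some (Fc m k hm x) := by
  have hP : 0 < Pm m k := by have : Pm m k = 2 * m * (k - 1) + 4 * m := rfl; omega
  have hq : x / Pm m k < k := (Nat.div_lt_iff_lt_mul hP).2 hx
  have hmem : ∀ l ∈ List.ofFn (fun q : Fin k => Bl m k (q : ℕ)), l.length = Pm m k := by
    intro l hl
    rw [List.mem_ofFn] at hl
    obtain ⟨i, rfl⟩ := hl
    exact Bl_len m k i i.isLt
  have hsplit : x = (x / Pm m k) * Pm m k + x % Pm m k := by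
    have h := Nat.div_add_mod x (Pm m k)
    have hco : Pm m k * (x / Pm m k) = (x / Pm m k) * Pm m k := Nat.mul_comm _ _
    omega
  conv_lhs => rw [hsplit]
  rw [flat_get (Pm m k) _ _ _ hmem (by simpa using hq) (Nat.mod_lt _ hP),
    List.getElem_ofFn]
  exact Bl_get m k hm _ _ hq (Nat.mod_lt _ hP)

lemma letter_rep (m k : ℕ) (hm : 0 < m) (x : ℕ) (a : Fin m) (hx : x < k * Pm m k)
    (hF : Fc m k hm x = some a) :
    ∃ q t, q < k ∧ t + 1 < k ∧
      ((t < q ∧ x = q * Pm m k + 2 * m * t + (a : ℕ)) ∨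
        (q ≤ t ∧ x = q * Pm m k + 2 * m * t + m + (a : ℕ))) := by
  have h2m : 0 < 2 * m := by omega
  have hP : 0 < Pm m k := by have : Pm m k = 2 * m * (k - 1) + 4 * m := rfl; omega
  have hdm := Nat.div_add_mod x (Pm m k)
  obtain ⟨q, hqdef⟩ : ∃ q, x / Pm m k = q := ⟨_, rfl⟩
  obtain ⟨r, hrdef⟩ : ∃ r, x % Pm m k = r := ⟨_, rfl⟩
  rw [hqdef, hrdef] at hdm
  have hqk : q < k := hqdef ▸ (Nat.div_lt_iff_lt_mul hP).2 hx
  have hxeq : x = q * Pm m k + r := by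
    have hco : Pm m k * q = q * Pm m k := Nat.mul_comm _ _
    omega
  have hdm2 := Nat.div_add_mod r (2 * m)
  obtain ⟨t, htdef⟩ : ∃ t, r / (2 * m) = t := ⟨_, rfl⟩
  obtain ⟨s, hsdef⟩ : ∃ s, r % (2 * m) = s := ⟨_, rfl⟩
  rw [htdef, hsdef] at hdm2
  have hmod : s < 2 * m := hsdef ▸ Nat.mod_lt _ h2m
  rw [Fc, FcBody, hqdef, hrdef] at hF
  by_cases hc : r < 2 * m * (k - 1)
  swap
  · rw [if_neg hc] at hF; exact absurd hF (by simp)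
  rw [if_pos hc] at hF
  have ht : t < k - 1 := by
    rw [← htdef, Nat.div_lt_iff_lt_mul h2m]
    have : (k - 1) * (2 * m) = 2 * m * (k - 1) := by ring
    omega
  refine ⟨q, t, hqk, by omega, ?_⟩
  by_cases hlt : r % (2 * m) < m
  · rw [dif_pos hlt] at hF
    by_cases hdq : r < 2 * m * q
    · rw [if_pos hdq] at hF
      have ha : (a : ℕ) = r % (2 * m) := by
        have := Option.some.inj hF
        rw [← this]
      left
      constructor
      · rw [← htdef, Nat.div_lt_iff_lt_mul h2m]
        have : q * (2 * m) = 2 * m * q := by ring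
        omega
      · omega
    · rw [if_neg hdq] at hF; exact absurd hF (by simp)
  · rw [dif_neg hlt] at hF
    by_cases hdq : r < 2 * m * q
    · rw [if_pos hdq] at hF; exact absurd hF (by simp)
    · rw [if_neg hdq] at hF
      have ha : (a : ℕ) = r % (2 * m) - m := by
        have := Option.some.inj hF
        rw [← this]
      right
      constructor
      · rw [← htdef, Nat.le_div_iff_mul_le h2m]
        have : q * (2 * m) = 2 * m * q := by ring
        omega
      · omega

lemma step (m k : ℕ) (hm : 0 < m) (x y qx tx qy ty ax ay : ℕ)
    (hax : ax < m) (hay : ay < m)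
    (hqx : qx < k) (hqy : qy < k) (htx : tx + 1 < k) (hty : ty + 1 < k)
    (hx : (tx < qx ∧ x = qx * Pm m k + 2 * m * tx + ax) ∨
      (qx ≤ tx ∧ x = qx * Pm m k + 2 * m * tx + m + ax))
    (hy : (ty < qy ∧ y = qy * Pm m k + 2 * m * ty + ay) ∨
      (qy ≤ ty ∧ y = qy * Pm m k + 2 * m * ty + m + ay))
    (h1 : x + m ≤ y) (h2 : y ≤ x + 3 * m) : qx = qy ∧ tx < ty := by
  have hPval : Pm m k = 2 * m * (k - 1) + 4 * m := rfl
  have ftx : 2 * m * (tx + 1) ≤ 2 * m * (k - 1) := mul2m_mono m _ _ (by omega)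
  have ftx2 : 2 * m * (tx + 1) = 2 * m * tx + 2 * m := by ring
  have fty : 2 * m * (ty + 1) ≤ 2 * m * (k - 1) := mul2m_mono m _ _ (by omega)
  have fty2 : 2 * m * (ty + 1) = 2 * m * ty + 2 * m := by ring
  have hq : qx = qy := by
    rcases Nat.lt_trichotomy qx qy with h | h | h
    · exfalso
      have g1 : (qx + 1) * Pm m k ≤ qy * Pm m k := Nat.mul_le_mul_right _ (by omega)
      have g2 : (qx + 1) * Pm m k = qx * Pm m k + Pm m k := by ring
      rcases hx with ⟨h3, h4⟩ | ⟨h3, h4⟩ <;> rcases hy with ⟨h5, h6⟩ | ⟨h5, h6⟩ <;> omega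
    · exact h
    · exfalso
      have g1 : (qy + 1) * Pm m k ≤ qx * Pm m k := Nat.mul_le_mul_right _ (by omega)
      have g2 : (qy + 1) * Pm m k = qy * Pm m k + Pm m k := by ring
      rcases hx with ⟨h3, h4⟩ | ⟨h3, h4⟩ <;> rcases hy with ⟨h5, h6⟩ | ⟨h5, h6⟩ <;> omega
  subst hq
  refine ⟨rfl, ?_⟩
  rcases Nat.lt_trichotomy tx ty with h | h | h
  · exact h
  · exfalso
    subst h
    rcases hx with ⟨h3, h4⟩ | ⟨h3, h4⟩ <;> rcases hy with ⟨h5, h6⟩ | ⟨h5, h6⟩ <;> omega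
  · exfalso
    have g1 : 2 * m * (ty + 1) ≤ 2 * m * tx := mul2m_mono m _ _ (by omega)
    rcases hx with ⟨h3, h4⟩ | ⟨h3, h4⟩ <;> rcases hy with ⟨h5, h6⟩ | ⟨h5, h6⟩ <;> omega

lemma two_mul_pred (m j : ℕ) (hj : 1 ≤ j) : 2 * m * j = 2 * m * (j - 1) + 2 * m := by
  have f5 : j - 1 + 1 = j := by omega
  conv_lhs => rw [← f5]
  ring

def off (m : ℕ) (p : List (Option (Fin m))) (ℓ j : ℕ) : ℕ :=
  if j < ℓ then 2 * m * j + (p.getD j none).elim m Fin.val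
  else if j = ℓ then 2 * m * ℓ
  else 2 * m * (j - 1) + (p.getD j none).elim (2 * m) (fun a => m + (a : ℕ))

lemma off_lt (m : ℕ) (p : List (Option (Fin m))) (ℓ j : ℕ) (h : j < ℓ) :
    2 * m * j ≤ off m p ℓ j ∧ off m p ℓ j ≤ 2 * m * j + m := by
  rw [off, if_pos h]
  cases hg : p.getD j none with
  | none => simp only [Option.elim]; omega
  | some a => have := a.isLt; simp only [Option.elim]; omega

lemma off_eq (m : ℕ) (p : List (Option (Fin m))) (ℓ : ℕ) : off m p ℓ ℓ = 2 * m * ℓ := by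
  rw [off, if_neg (by omega), if_pos rfl]

lemma off_gt (m : ℕ) (p : List (Option (Fin m))) (ℓ j : ℕ) (h : ℓ < j) :
    2 * m * (j - 1) + m ≤ off m p ℓ j ∧ off m p ℓ j ≤ 2 * m * (j - 1) + 2 * m := by
  rw [off, if_neg (by omega), if_neg (by omega)]
  cases hg : p.getD j none with
  | none => simp only [Option.elim]; omega
  | some a => have := a.isLt; simp only [Option.elim]; omega

lemma off_mono (m : ℕ) (hm : 0 < m) (p : List (Option (Fin m))) (ℓ i j : ℕ) (h : i < j) :
    off m p ℓ i < off m p ℓ j := by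
  have f1 : 2 * m * (i + 1) ≤ 2 * m * j := mul2m_mono m _ _ (by omega)
  have f2 : 2 * m * (i + 1) = 2 * m * i + 2 * m := by ring
  rcases Nat.lt_trichotomy j ℓ with hj | hj | hj
  · have bi := off_lt m p ℓ i (by omega)
    have bj := off_lt m p ℓ j hj
    omega
  · have bi := off_lt m p ℓ i (by omega)
    have bj : off m p ℓ j = 2 * m * j := by rw [hj]; exact off_eq m p ℓ
    omega
  · have bj := off_gt m p ℓ j hj
    rcases Nat.lt_trichotomy i ℓ with hi | hi | hi
    · have bi := off_lt m p ℓ i hi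
      have f3 : 2 * m * (i + 1) ≤ 2 * m * (j - 1) := mul2m_mono m _ _ (by omega)
      omega
    · have bi : off m p ℓ i = 2 * m * i := by rw [hi]; exact off_eq m p ℓ
      have f3 : 2 * m * i ≤ 2 * m * (j - 1) := mul2m_mono m _ _ (by omega)
      omega
    · have bi := off_gt m p ℓ i hi
      have f3 : 2 * m * (i - 1 + 1) ≤ 2 * m * (j - 1) := mul2m_mono m _ _ (by omega)
      have f4 : 2 * m * (i - 1 + 1) = 2 * m * (i - 1) + 2 * m := by ring
      omega

lemma off_gap (m : ℕ) (hm : 0 < m) (p : List (Option (Fin m))) (ℓ j : ℕ) :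
    off m p ℓ j + m ≤ off m p ℓ (j + 1) ∧ off m p ℓ (j + 1) ≤ off m p ℓ j + 3 * m := by
  have f2 : 2 * m * (j + 1) = 2 * m * j + 2 * m := by ring
  rcases Nat.lt_trichotomy (j + 1) ℓ with h | h | h
  · have bi := off_lt m p ℓ j (by omega)
    have bj := off_lt m p ℓ (j + 1) h
    omega
  · have bi := off_lt m p ℓ j (by omega)
    have bj : off m p ℓ (j + 1) = 2 * m * (j + 1) := by rw [h]; exact off_eq m p ℓ
    omega
  · have bj := off_gt m p ℓ (j + 1) h
    simp only [Nat.add_sub_cancel] at bj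
    rcases Nat.lt_trichotomy j ℓ with hj | hj | hj
    · omega
    · have bi : off m p ℓ j = 2 * m * j := by rw [hj]; exact off_eq m p ℓ
      omega
    · have bi := off_gt m p ℓ j hj
      have f6 : 2 * m * j = 2 * m * (j - 1) + 2 * m := two_mul_pred m j (by omega)
      omega

lemma off_ub (m : ℕ) (hm : 0 < m) (p : List (Option (Fin m))) (ℓ j k : ℕ)
    (hℓ : ℓ < k) (hj : j < k) : off m p ℓ j ≤ 2 * m * (k - 1) := by
  rcases Nat.lt_trichotomy j ℓ with h | h | h
  · have hb := off_lt m p ℓ j h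
    have f1 : 2 * m * (j + 1) ≤ 2 * m * (k - 1) := mul2m_mono m _ _ (by omega)
    have f3 : 2 * m * (j + 1) = 2 * m * j + 2 * m := by ring
    omega
  · subst h
    have hb := off_eq m p j
    have f1 : 2 * m * j ≤ 2 * m * (k - 1) := mul2m_mono m _ _ (by omega)
    omega
  · have hb := off_gt m p ℓ j h
    have f1 : 2 * m * (j - 1 + 1) ≤ 2 * m * (k - 1) := mul2m_mono m _ _ (by omega)
    have f3 : 2 * m * (j - 1 + 1) = 2 * m * (j - 1) + 2 * m := by ring
    omega

lemma FcB_letterD (m k : ℕ) (hm : 0 < m) (q t : ℕ) (a : Fin m) (h1 : t < q) (hq : q ≤ k - 1) :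
    FcBody m k hm q (2 * m * t + (a : ℕ)) = some a := by
  have ha := a.isLt
  have e1 : (2 * m * t + (a : ℕ)) % (2 * m) = (a : ℕ) := by
    rw [Nat.mul_add_mod]; exact Nat.mod_eq_of_lt (by omega)
  have f1 : 2 * m * (t + 1) ≤ 2 * m * q := mul2m_mono m _ _ (by omega)
  have f2 : 2 * m * q ≤ 2 * m * (k - 1) := mul2m_mono m _ _ hq
  have f3 : 2 * m * (t + 1) = 2 * m * t + 2 * m := by ring
  rw [FcBody, if_pos (by omega), dif_pos (by rw [e1]; exact ha), if_pos (by omega)]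
  exact congrArg some (Fin.ext e1)

lemma FcB_noneD (m k : ℕ) (hm : 0 < m) (q t : ℕ) (h1 : t < q) (hq : q ≤ k - 1) :
    FcBody m k hm q (2 * m * t + m) = none := by
  have e1 : (2 * m * t + m) % (2 * m) = m := by
    rw [Nat.mul_add_mod]; exact Nat.mod_eq_of_lt (by omega)
  have f1 : 2 * m * (t + 1) ≤ 2 * m * q := mul2m_mono m _ _ (by omega)
  have f2 : 2 * m * q ≤ 2 * m * (k - 1) := mul2m_mono m _ _ hq
  have f3 : 2 * m * (t + 1) = 2 * m * t + 2 * m := by ring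
  rw [FcBody, if_pos (by omega), dif_neg (by omega), if_pos (by omega)]

lemma FcB_letterE (m k : ℕ) (hm : 0 < m) (q t : ℕ) (a : Fin m) (h1 : q ≤ t) (h2 : t < k - 1) :
    FcBody m k hm q (2 * m * t + m + (a : ℕ)) = some a := by
  have ha := a.isLt
  have e0 : 2 * m * t + m + (a : ℕ) = 2 * m * t + (m + (a : ℕ)) := by omega
  have e1 : (2 * m * t + (m + (a : ℕ))) % (2 * m) = m + (a : ℕ) := by
    rw [Nat.mul_add_mod]; exact Nat.mod_eq_of_lt (by omega)
  have f1 : 2 * m * (t + 1) ≤ 2 * m * (k - 1) := mul2m_mono m _ _ (by omega)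
  have f3 : 2 * m * (t + 1) = 2 * m * t + 2 * m := by ring
  have fq : 2 * m * q ≤ 2 * m * t := mul2m_mono m _ _ h1
  rw [e0, FcBody, if_pos (by omega), dif_neg (by omega), if_neg (by omega)]
  refine congrArg some (Fin.ext ?_)
  show (2 * m * t + (m + (a : ℕ))) % (2 * m) - m = (a : ℕ)
  omega

lemma FcB_noneE (m k : ℕ) (hm : 0 < m) (q t : ℕ) (h1 : q ≤ t) :
    FcBody m k hm q (2 * m * t) = none := by
  have e1 : (2 * m * t) % (2 * m) = 0 := Nat.mul_mod_right _ _
  have fq : 2 * m * q ≤ 2 * m * t := mul2m_mono m _ _ h1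
  by_cases hc : 2 * m * t < 2 * m * (k - 1)
  · rw [FcBody, if_pos hc, dif_pos (by omega), if_neg (by omega)]
  · rw [FcBody, if_neg hc]

lemma Fc_e (m k : ℕ) (hm : 0 < m) (p : List (Option (Fin m))) (ℓ : ℕ) (hℓ : ℓ < k)
    (hpℓ : p.getD ℓ none = none) (j : ℕ) (hj : j < k) :
    Fc m k hm (ℓ * Pm m k + off m p ℓ j) = p.getD j none := by
  have hPv : Pm m k = 2 * m * (k - 1) + 4 * m := rfl
  have hP : 0 < Pm m k := by omega
  have hub := off_ub m hm p ℓ j k hℓ hj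
  have hoff : off m p ℓ j < Pm m k := by omega
  have hdiv : (ℓ * Pm m k + off m p ℓ j) / Pm m k = ℓ := by
    rw [Nat.mul_comm ℓ, Nat.mul_add_div hP, Nat.div_eq_of_lt hoff]
    omega
  have hmodP : (ℓ * Pm m k + off m p ℓ j) % Pm m k = off m p ℓ j := by
    rw [Nat.mul_comm ℓ, Nat.mul_add_mod]; exact Nat.mod_eq_of_lt hoff
  rw [Fc, hdiv, hmodP]
  rcases Nat.lt_trichotomy j ℓ with h | h | h
  · rw [off, if_pos h]
    cases hg : p.getD j none with
    | none =>
      simp only [Option.elim]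
      exact FcB_noneD m k hm ℓ j h (by omega)
    | some a =>
      simp only [Option.elim]
      exact FcB_letterD m k hm ℓ j a h (by omega)
  · subst h
    rw [off_eq m p j, hpℓ]
    exact FcB_noneE m k hm j j le_rfl
  · rw [off, if_neg (by omega), if_neg (by omega)]
    cases hg : p.getD j none with
    | none =>
      simp only [Option.elim]
      have key : 2 * m * (j - 1) + 2 * m = 2 * m * j := (two_mul_pred m j (by omega)).symm
      rw [key]
      exact FcB_noneE m k hm ℓ j (by omega)
    | some a =>
      simp only [Option.elim]
      have key : 2 * m * (j - 1) + (m + (a : ℕ)) = 2 * m * (j - 1) + m + (a : ℕ) := by omega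
      rw [key]
      exact FcB_letterE m k hm ℓ (j - 1) a (by omega) (by omega)

end S8

/-- Γ is modelled as `Fin m` and Σ = Γ ∪ {#} as `Option (Fin m)` with `#` = `none`.
With `T_i = T_{i,1} ⋯ T_{i,k}` where `T_{i,j} = b_1 ⋯ b_m #^m` for `j ≠ i` and
`T_{i,i} = #^m`, and `T = T_1 #^{3m} T_2 #^{3m} ⋯ #^{3m} T_k`, with all length constraints
`(m-1, 3m-1)`, the gc-subsequences of `T` of length `k` are exactly the length-`k` strings
containing at least one `#`. -/
theorem stmt8 (m k : ℕ) (hm : 1 ≤ m) (hk : 1 ≤ k) :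
    {p : List (Option (Fin m)) | p.length = k ∧
        IsLenSubseq
          (List.intercalate (List.replicate (3 * m) (none : Option (Fin m)))
            (List.ofFn fun i : Fin k =>
              (List.ofFn fun j : Fin k =>
                if j = i then List.replicate m (none : Option (Fin m))
                else ((List.finRange m).map some) ++ List.replicate m none).flatten))
          p (fun _ => m - 1) (fun _ => 3 * m - 1)} =
      {p : List (Option (Fin m)) | p.length = k ∧ (none : Option (Fin m)) ∈ p} := by
  have hm0 : 0 < m := hm
  have hPv : S8.Pm m k = 2 * m * (k - 1) + 4 * m := rfl
  have hTeq := S8.T_eq m k hk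
  have hTlen' := S8.T_len m k
  have hTmlen : (S8.Tm m k).length + 3 * m = k * S8.Pm m k := by
    have h := congrArg List.length hTeq
    simp only [List.length_append, List.length_replicate] at h
    omega
  ext p
  simp only [Set.mem_setOf_eq]
  constructor
  · rintro ⟨hlen, hsub⟩
    have hsub' : IsLenSubseq (S8.Tm m k) p (fun _ => m - 1) (fun _ => 3 * m - 1) := hsub
    obtain ⟨e, hmono, hlt, hget, hgap⟩ := hsub'
    refine ⟨hlen, ?_⟩
    by_contra hnone
    have hrepn : ∀ n, n < k → ∃ q t a, q < k ∧ t + 1 < k ∧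
        ((t < q ∧ e n = q * S8.Pm m k + 2 * m * t + a) ∨
          (q ≤ t ∧ e n = q * S8.Pm m k + 2 * m * t + m + a)) ∧ a < m := by
      intro n hn
      have hik : n < p.length := by omega
      have h1 := hget n hik
      have hei : e n < (S8.Tm m k).length := hlt n hik
      have h2 : (S8.Tm m k ++ List.replicate (3 * m) none)[e n]? = (S8.Tm m k)[e n]? := by
        rw [List.getElem?_append, if_pos hei]
      rw [hTeq, S8.T_get m k hm0 (e n) (by omega)] at h2
      have h3 : some (S8.Fc m k hm0 (e n)) = p[n]? := by rw [h2, h1]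
      rw [List.getElem?_eq_getElem hik] at h3
      cases hpn : p[n]'hik with
      | none => exact absurd (hpn ▸ List.getElem_mem hik) hnone
      | some a =>
        rw [hpn] at h3
        have hFa : S8.Fc m k hm0 (e n) = some a := Option.some.inj h3
        obtain ⟨q, t, hq, ht, hrep⟩ := S8.letter_rep m k hm0 (e n) a (by omega) hFa
        exact ⟨q, t, (a : ℕ), hq, ht, hrep, a.isLt⟩
    have hchain : ∀ n, n < k → ∃ q t a, q < k ∧ t + 1 < k ∧
        ((t < q ∧ e n = q * S8.Pm m k + 2 * m * t + a) ∨
          (q ≤ t ∧ e n = q * S8.Pm m k + 2 * m * t + m + a)) ∧ a < m ∧ n ≤ t := by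
      intro n
      induction n with
      | zero =>
        intro hn
        obtain ⟨q, t, a, h1, h2, h3, h4⟩ := hrepn 0 hn
        exact ⟨q, t, a, h1, h2, h3, h4, by omega⟩
      | succ n ih =>
        intro hn
        obtain ⟨q, t, a, h1, h2, h3, h4, h5⟩ := ih (by omega)
        obtain ⟨q', t', a', g1, g2, g3, g4⟩ := hrepn (n + 1) hn
        have hx1 : e n < e (n + 1) := hmono n (n + 1) (by omega) (by omega)
        have hgap' := hgap n (by omega)
        have hxy1 : e n + m ≤ e (n + 1) := by
          have := hgap'.1
          simp only at this
          omega
        have hxy2 : e (n + 1) ≤ e n + 3 * m := by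
          have := hgap'.2
          simp only at this
          omega
        have hstep := S8.step m k hm0 (e n) (e (n + 1)) q t q' t' a a'
          h4 g4 h1 g1 h2 g2 h3 g3 hxy1 hxy2
        exact ⟨q', t', a', g1, g2, g3, g4, by omega⟩
    obtain ⟨q, t, a, h1, h2, h3, h4, h5⟩ := hchain (k - 1) (by omega)
    omega
  · rintro ⟨hlen, hpmem⟩
    refine ⟨hlen, ?_⟩
    obtain ⟨ℓ, hℓp, hpℓ⟩ := List.mem_iff_getElem.1 hpmem
    have hℓk : ℓ < k := by omega
    have hpd : p.getD ℓ none = none := by rw [List.getD_eq_getElem _ _ hℓp, hpℓ]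
    suffices h : IsLenSubseq (S8.Tm m k) p (fun _ => m - 1) (fun _ => 3 * m - 1) by exact h
    have helt : ∀ i, i < k → ℓ * S8.Pm m k + S8.off m p ℓ i < (S8.Tm m k).length := by
      intro i hik
      have hub := S8.off_ub m hm0 p ℓ i k hℓk hik
      have f1 : ℓ * S8.Pm m k ≤ (k - 1) * S8.Pm m k := Nat.mul_le_mul_right _ (by omega)
      have f2 : k * S8.Pm m k = (k - 1) * S8.Pm m k + S8.Pm m k := by
        have h6 := Nat.succ_mul (k - 1) (S8.Pm m k)
        rw [Nat.succ_eq_add_one, show k - 1 + 1 = k from by omega] at h6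
        omega
      omega
    refine ⟨fun j => ℓ * S8.Pm m k + S8.off m p ℓ j, ?_, ?_, ?_, ?_⟩
    · intro i j hij _
      exact Nat.add_lt_add_left (S8.off_mono m hm0 p ℓ i j hij) _
    · intro i hip
      exact helt i (by omega)
    · intro i hip
      have hik : i < k := by omega
      have hFc := S8.Fc_e m k hm0 p ℓ hℓk hpd i hik
      have hei := helt i hik
      have h2 : (S8.Tm m k ++ List.replicate (3 * m) none)[ℓ * S8.Pm m k + S8.off m p ℓ i]?
          = (S8.Tm m k)[ℓ * S8.Pm m k + S8.off m p ℓ i]? := by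
        rw [List.getElem?_append, if_pos hei]
      rw [hTeq, S8.T_get m k hm0 _ (by omega)] at h2
      rw [← h2, hFc, List.getD_eq_getElem _ _ (by omega), List.getElem?_eq_getElem hip]
    · intro i hip
      have hgapb := S8.off_gap m hm0 p ℓ i
      have hmono' := S8.off_mono m hm0 p ℓ i (i + 1) (by omega)
      constructor <;> simp only [] <;> omega
end

section
/- Let Σ = {a,b}, W_1,…,W_k nonempty subsets of {aa, bb}, and define for each j the string w_j by: w_j = aa if W_j = {aa}, w_j = abba if W_j = {bb}, and w_j = aabba if W_j = {aa, bb}. Let w = w_1 (bab) w_2 (bab) ⋯ (bab) w_k, and let gc be the tuple of constraints requiring, for a length-2k subsequence, zero gap between positions 2j−1 and 2j and gap length in [3,9] between positions 2j and 2j+1. Then the set of gc-subsequences p of w with p[2j−1]p[2j] ∈ {aa, bb} for every j ∈ [k] equals W_1 · W_2 ⋯ W_k. -/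
namespace List

variable {α : Type*}

def blockStart (L : List (List α)) (j : ℕ) : ℕ := (L.take j).flatten.length

theorem drop_blockStart_flatten (L : List (List α)) (j : ℕ) :
    L.flatten.drop (L.blockStart j) = (L.drop j).flatten :=
  calc L.flatten.drop (L.blockStart j)
      = ((L.take j).flatten ++ (L.drop j).flatten).drop (L.take j).flatten.length := by
        rw [← flatten_append, take_append_drop]; rfl
    _ = (L.drop j).flatten := drop_left

theorem blockStart_succ (L : List (List α)) {j : ℕ} (hj : j < L.length) :
    L.blockStart (j + 1) = L.blockStart j + L[j].length := by
  rw [blockStart, blockStart, take_add_one, getElem?_eq_getElem hj, flatten_append,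
    length_append]
  simp

theorem blockStart_mono (L : List (List α)) : Monotone L.blockStart := fun _ _ h =>
  (take_prefix_take_left h).flatten.length_le

theorem exists_eq_blockStart_add (L : List (List α)) {i : ℕ} (hi : i < L.flatten.length) :
    ∃ j, ∃ hj : j < L.length, ∃ t < L[j].length, i = L.blockStart j + t := by
  induction L generalizing i with
  | nil => simp at hi
  | cons l L ih =>
    by_cases hil : i < l.length
    · exact ⟨0, by simp, i, hil, by simp [blockStart]⟩
    · obtain ⟨j, hj, t, ht, hjt⟩ := ih (i := i - l.length) (by simp at hi ⊢; omega)
      have hstart : (l :: L).blockStart (j + 1) = l.length + L.blockStart j := by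
        simp [blockStart]
      exact ⟨j + 1, by simpa using hj, t, ht, by omega⟩

theorem blockStart_ofFn {k n : ℕ} (u : Fin k → List α) (hu : ∀ j, (u j).length = n)
    {j : ℕ} (hj : j ≤ k) : (ofFn u).blockStart j = n * j := by
  induction j with
  | zero => simp [blockStart]
  | succ j ih =>
    rw [blockStart_succ _ (by simpa using hj), ih (by omega), List.getElem_ofFn, hu]
    ring

theorem take_drop_flatten_ofFn {k n : ℕ} (u : Fin k → List α) (hu : ∀ j, (u j).length = n)
    (j : Fin k) : ((ofFn u).flatten.drop (n * j)).take n = u j := by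
  rw [← blockStart_ofFn u hu j.isLt.le, drop_blockStart_flatten,
    drop_eq_getElem_cons (by simp), flatten_cons, List.getElem_ofFn]
  exact take_left' (hu j)

theorem eq_flatten_ofFn_take_drop {n : ℕ} : ∀ {k : ℕ} {p : List α}, p.length = n * k →
    p = (ofFn fun m : Fin k => (p.drop (n * m)).take n).flatten
  | 0, p, hp => by simpa using hp
  | k + 1, p, hp => by
    rw [ofFn_succ, flatten_cons]
    conv_lhs => rw [← take_append_drop n p]
    congr 1
    convert eq_flatten_ofFn_take_drop (k := k) (p := p.drop n)
      (by rw [length_drop, hp, Nat.mul_succ, Nat.add_sub_cancel]) using 4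
    simp [mul_add, add_comm]

theorem take_drop_append_of_add_le_length {l l' : List α} {i n : ℕ}
    (h : i + n ≤ l.length) : ((l ++ l').drop i).take n = (l.drop i).take n := by
  rw [drop_append_of_le_length (by omega), take_append_of_le_length (by simp; omega)]

theorem intercalate_append_eq_flatten_map (s : List α) :
    ∀ {l : List (List α)}, l ≠ [] → s.intercalate l ++ s = (l.map (· ++ s)).flatten
  | [_], _ => by simp
  | a :: b :: l, _ => by
    rw [intercalate_cons_cons, map_cons, flatten_cons,
      ← intercalate_append_eq_flatten_map s (l := b :: l) (by simp)]
    simp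

end List

section PairEmbedding

variable {α : Type*}

def alternatingGap (c i : ℕ) : ℕ := if i % 2 = 0 then 0 else c

def IsPairEmbedding (v p : List α) (k lo hi : ℕ) (f : ℕ → ℕ) : Prop :=
  (∀ m < k, f m + 2 ≤ v.length ∧ (v.drop (f m)).take 2 = (p.drop (2 * m)).take 2) ∧
  ∀ m, m + 1 < k → f m + 2 + lo ≤ f (m + 1) ∧ f (m + 1) ≤ f m + 2 + hi

theorem IsLenSubseq.exists_isPairEmbedding {v p : List α} {k lo hi : ℕ}
    (h : IsLenSubseq v p (alternatingGap lo) (alternatingGap hi)) (hp : p.length = 2 * k) :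
    ∃ f, IsPairEmbedding v p k lo hi f := by
  obtain ⟨e, hmono, hbound, hval, hgap⟩ := h
  rw [hp] at hmono hbound hval hgap
  have hpair : ∀ m < k, e (2 * m + 1) = e (2 * m) + 1 := fun m hm => by
    have hlt := hmono (2 * m) (2 * m + 1) (by omega) (by omega)
    have hzero := (hgap (2 * m) (by omega)).2
    simp only [alternatingGap, Nat.mul_mod_right, if_true] at hzero
    omega
  refine ⟨fun m => e (2 * m), fun m hm => ⟨?_, ?_⟩, fun m hm => ?_⟩
  · have hbound₁ := hbound (2 * m + 1) (by omega)
    have hm1 := hpair m hm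
    dsimp only
    omega
  · refine List.ext_getElem? fun r => ?_
    simp only [List.getElem?_take, List.getElem?_drop]
    split_ifs with hr
    · obtain rfl | rfl : r = 0 ∨ r = 1 := by omega
      · exact hval (2 * m) (by omega)
      · rw [← hpair m hm]
        exact hval (2 * m + 1) (by omega)
    · rfl
  · have hlt := hmono (2 * m + 1) (2 * (m + 1)) (by omega) (by omega)
    have hm1 := hpair m (by omega)
    have hgm := hgap (2 * m + 1) (by omega)
    simp only [alternatingGap, show (2 * m + 1) % 2 = 1 by omega,
      show 2 * m + 1 + 1 = 2 * (m + 1) by ring, one_ne_zero, if_false] at hgm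
    dsimp only
    omega

theorem IsPairEmbedding.isLenSubseq {v p : List α} {k lo hi : ℕ} {f : ℕ → ℕ}
    (hf : IsPairEmbedding v p k lo hi f) (hp : p.length = 2 * k) :
    IsLenSubseq v p (alternatingGap lo) (alternatingGap hi) := by
  obtain ⟨hval, hgap⟩ := hf
  set e : ℕ → ℕ := fun i => f (i / 2) + i % 2
  have he : ∀ m r, r < 2 → e (2 * m + r) = f m + r := fun m r hr => by
    simp only [e, show (2 * m + r) / 2 = m by omega, show (2 * m + r) % 2 = r by omega]
  have hsplit : ∀ i, ∃ m r, r < 2 ∧ i = 2 * m + r := fun i => ⟨i / 2, i % 2, by omega, by omega⟩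
  have hadj : ∀ i, i + 1 < 2 * k → e i < e (i + 1) ∧
      alternatingGap lo i ≤ e (i + 1) - (e i + 1) ∧
      e (i + 1) - (e i + 1) ≤ alternatingGap hi i := by
    intro i hi
    obtain ⟨m, r, hr, rfl⟩ := hsplit i
    obtain rfl | rfl : r = 0 ∨ r = 1 := by omega
    · simp only [alternatingGap, he m 0 (by omega), he m 1 (by omega),
        show (2 * m + 0) % 2 = 0 by omega, if_true]
      omega
    · have := hgap m (by omega)
      rw [show 2 * m + 1 + 1 = 2 * (m + 1) + 0 by ring, he m 1 (by omega),
        he (m + 1) 0 (by omega)]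
      simp only [alternatingGap, show (2 * m + 1) % 2 = 1 by omega, one_ne_zero, if_false]
      omega
  have hmono : StrictMonoOn e (Set.Iic (2 * k - 1)) :=
    strictMonoOn_Iic_of_lt_succ fun i hi => by simpa using (hadj i (by omega)).1
  refine ⟨e, fun i j hij hj => hmono (by simp; omega) (by simp; omega) hij,
    fun i hi => ?_, fun i hi => ?_, fun i hi => (hadj i (by omega)).2⟩
  · obtain ⟨m, r, hr, rfl⟩ := hsplit i
    have := hval m (by omega)
    rw [he m r hr]
    omega
  · obtain ⟨m, r, hr, rfl⟩ := hsplit i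
    have := congrArg (·[r]?) (hval m (by omega)).2
    simpa [he m r hr, List.getElem?_take, hr] using this

end PairEmbedding

local notation "bab" => [true, false, true]

def IsGadget (W : Set (List Bool)) (g : List Bool) : Prop :=
  (W = {[false, false]} ∧ g = [false, false]) ∨
  (W = {[true, true]} ∧ g = [false, true, true, false]) ∨
  (W = {[false, false], [true, true]} ∧ g = [false, false, true, true, false])

namespace IsGadget

variable {W : Set (List Bool)} {g : List Bool}

theorem length_le (h : IsGadget W g) : g.length ≤ 5 := by
  rcases h with ⟨-, rfl⟩ | ⟨-, rfl⟩ | ⟨-, rfl⟩ <;> simp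

theorem head?_eq (h : IsGadget W g) : g.head? = some false := by
  rcases h with ⟨-, rfl⟩ | ⟨-, rfl⟩ | ⟨-, rfl⟩ <;> rfl

theorem subset (h : IsGadget W g) : W ⊆ {[false, false], [true, true]} := by
  rcases h with ⟨rfl, -⟩ | ⟨rfl, -⟩ | ⟨rfl, -⟩ <;> simp

theorem exists_take_drop_eq (h : IsGadget W g) {x : List Bool} (hx : x ∈ W) :
    ∃ t ≤ 2, t + 2 ≤ g.length ∧ (g.drop t).take 2 = x := by
  rcases h with ⟨rfl, rfl⟩ | ⟨rfl, rfl⟩ | ⟨rfl, rfl⟩ <;>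
    simp only [Set.mem_singleton_iff, Set.mem_insert_iff] at hx
  · exact ⟨0, by simp [hx]⟩
  · exact ⟨1, by simp [hx]⟩
  · rcases hx with rfl | rfl
    · exact ⟨0, by simp⟩
    · exact ⟨2, by simp⟩

theorem length_eq_two_of_mem (h : IsGadget W g) {x : List Bool} (hx : x ∈ W) :
    x.length = 2 := by
  obtain ⟨t, -, hfit, rfl⟩ := h.exists_take_drop_eq hx
  rw [List.length_take, List.length_drop]
  omega

theorem take_drop_mem (h : IsGadget W g) {tail : List Bool} (htail : tail.head? ≠ some true)
    {t : ℕ} (ht : t < g.length + 3)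
    (hmem : ((g ++ bab ++ tail).drop t).take 2 ∈ ({[false, false], [true, true]} : Set _)) :
    t + 2 ≤ g.length ∧ ((g ++ bab ++ tail).drop t).take 2 ∈ W := by
  rcases tail with _ | ⟨_ | _, tail⟩
  all_goals simp only [List.head?_cons, ne_eq, not_true_eq_false] at htail
  all_goals
    rcases h with ⟨rfl, rfl⟩ | ⟨rfl, rfl⟩ | ⟨rfl, rfl⟩ <;> norm_num at ht <;>
      interval_cases t <;> simp_all

end IsGadget

section GadgetWord

variable {k : ℕ} {W : Fin k → Set (List Bool)} {ws : Fin k → List Bool}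

def gadgetWord (ws : Fin k → List Bool) : List Bool := List.intercalate bab (List.ofFn ws)

def sepBlocks (ws : Fin k → List Bool) : List (List Bool) := List.ofFn fun j => ws j ++ bab

@[simp]
theorem length_sepBlocks : (sepBlocks ws).length = k := by
  simp [sepBlocks]

@[simp]
theorem getElem_sepBlocks {j : ℕ} (hj : j < (sepBlocks ws).length) :
    (sepBlocks ws)[j] = ws ⟨j, by simpa using hj⟩ ++ bab :=
  List.getElem_ofFn ..

theorem gadgetWord_append_bab (hk : 0 < k) : gadgetWord ws ++ bab = (sepBlocks ws).flatten := by
  rw [gadgetWord, List.intercalate_append_eq_flatten_map _ (by simp; omega), sepBlocks,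
    List.map_ofFn]
  rfl

theorem blockStart_add_length_le {j : ℕ} (hj : j < k) :
    (sepBlocks ws).blockStart j + (ws ⟨j, hj⟩).length ≤ (gadgetWord ws).length := by
  have hsucc := (sepBlocks ws).blockStart_succ (j := j) (by simpa)
  have hle := (sepBlocks ws).blockStart_mono (show j + 1 ≤ k by omega)
  have hlast : (sepBlocks ws).blockStart k = (gadgetWord ws).length + 3 := by
    rw [List.blockStart, List.take_of_length_le (by simp), ← gadgetWord_append_bab (by omega),
      List.length_append]
    rfl
  simp only [getElem_sepBlocks, List.length_append, List.length_cons, List.length_nil] at hsucc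
  omega

theorem take_drop_gadgetWord_blockStart_add {j : ℕ} (hj : j < k) {t : ℕ}
    (h : (sepBlocks ws).blockStart j + t + 2 ≤ (gadgetWord ws).length) :
    ((gadgetWord ws).drop ((sepBlocks ws).blockStart j + t)).take 2 =
      ((ws ⟨j, hj⟩ ++ bab ++ ((sepBlocks ws).drop (j + 1)).flatten).drop t).take 2 := by
  rw [← List.take_drop_append_of_add_le_length (l' := bab) h, gadgetWord_append_bab (by omega),
    ← List.drop_drop, List.drop_blockStart_flatten,
    List.drop_eq_getElem_cons (l := sepBlocks ws) (by simpa), List.flatten_cons, getElem_sepBlocks]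

theorem head?_flatten_drop_sepBlocks_ne (hws : ∀ j, IsGadget (W j) (ws j)) (i : ℕ) :
    ((sepBlocks ws).drop i).flatten.head? ≠ some true := by
  rcases lt_or_ge i k with hi | hi
  · rw [List.drop_eq_getElem_cons (by simpa), List.flatten_cons, getElem_sepBlocks,
      List.append_assoc, List.head?_append, (hws ⟨i, hi⟩).head?_eq]
    simp
  · simp [List.drop_eq_nil_of_le (show (sepBlocks ws).length ≤ i by simpa)]

theorem exists_block_of_take_drop_mem (hws : ∀ j, IsGadget (W j) (ws j)) {q : ℕ}
    (hq : q + 2 ≤ (gadgetWord ws).length)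
    (hmem : ((gadgetWord ws).drop q).take 2 ∈ ({[false, false], [true, true]} : Set _)) :
    ∃ j : Fin k, ∃ t, t + 2 ≤ (ws j).length ∧ q = (sepBlocks ws).blockStart j + t ∧
      ((gadgetWord ws).drop q).take 2 ∈ W j := by
  have hk : 0 < k := Nat.pos_of_ne_zero fun hk => by subst hk; simp [gadgetWord] at hq
  obtain ⟨j, hj, t, ht, rfl⟩ := (sepBlocks ws).exists_eq_blockStart_add (i := q)
    (by rw [← gadgetWord_append_bab hk, List.length_append]; omega)
  rw [length_sepBlocks] at hj
  rw [take_drop_gadgetWord_blockStart_add hj hq] at hmem ⊢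
  obtain ⟨hin, hW⟩ := (hws ⟨j, hj⟩).take_drop_mem
    (head?_flatten_drop_sepBlocks_ne hws (j + 1)) (by simpa using ht) hmem
  exact ⟨⟨j, hj⟩, t, hin, rfl, hW⟩

theorem mem_of_isPairEmbedding (hws : ∀ j, IsGadget (W j) (ws j)) {p : List Bool} {f : ℕ → ℕ}
    (hf : IsPairEmbedding (gadgetWord ws) p k 3 9 f)
    (hp : ∀ j : Fin k, (p.drop (2 * j)).take 2 ∈ ({[false, false], [true, true]} : Set _))
    (j : Fin k) : (p.drop (2 * j)).take 2 ∈ W j := by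
  obtain ⟨n, rfl⟩ : ∃ n, k = n + 1 := ⟨k - 1, by have := j.isLt; omega⟩
  have hblock : ∀ m : Fin (n + 1), ∃ J : Fin (n + 1), ∃ t, t + 2 ≤ (ws J).length ∧
      f m = (sepBlocks ws).blockStart J + t ∧ (p.drop (2 * m)).take 2 ∈ W J := fun m => by
    obtain ⟨hlen, hfac⟩ := hf.1 m m.isLt
    rw [← hfac]
    exact exists_block_of_take_drop_mem hws hlen (hfac ▸ hp m)
  choose J t hfit hpos hmem using hblock
  have hJ : StrictMono J := Fin.strictMono_iff_lt_succ.2 fun i => by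
    by_contra! hle
    have hstart := (sepBlocks ws).blockStart_mono (Fin.val_le_of_le hle)
    have hgap := (hf.2 i (by omega)).1
    have hpos₁ := hpos i.castSucc
    have hpos₂ := hpos i.succ
    have hfit₂ := hfit i.succ
    have hshort := (hws (J i.succ)).length_le
    simp only [Fin.val_succ, Fin.val_castSucc] at hpos₁ hpos₂
    omega
  simpa [hJ.eq_id] using hmem j

theorem exists_isPairEmbedding (hws : ∀ j, IsGadget (W j) (ws j)) {p : List Bool}
    (hp : ∀ j : Fin k, (p.drop (2 * j)).take 2 ∈ W j) :
    ∃ f, IsPairEmbedding (gadgetWord ws) p k 3 9 f := by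
  choose t hsmall hfit hfac using fun j => (hws j).exists_take_drop_eq (hp j)
  refine ⟨fun m => if hm : m < k then (sepBlocks ws).blockStart m + t ⟨m, hm⟩ else 0,
    fun m hm => ?_, fun m hm => ?_⟩
  · have hend := blockStart_add_length_le (ws := ws) hm
    have hfitm := hfit ⟨m, hm⟩
    simp only [dif_pos hm]
    refine ⟨by omega, ?_⟩
    rw [take_drop_gadgetWord_blockStart_add hm (by omega), List.append_assoc,
      List.take_drop_append_of_add_le_length hfitm, hfac]
  · simp only [dif_pos hm, dif_pos (show m < k by omega)]
    have hsucc := (sepBlocks ws).blockStart_succ (j := m) (by simp; omega)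
    simp only [getElem_sepBlocks, List.length_append, List.length_cons, List.length_nil] at hsucc
    have hsmall' := hsmall ⟨m + 1, hm⟩
    have hfitm := hfit ⟨m, by omega⟩
    have hshort := (hws ⟨m, by omega⟩).length_le
    omega

end GadgetWord

/-- The alphabet `{a, b}` is `Bool` with `a = false` and `b = true`. -/
theorem stmt11_general (k : ℕ)
    (W : Fin k → Set (List Bool)) (ws : Fin k → List Bool)
    (hws : ∀ j,
      (W j = {[false, false]} ∧ ws j = [false, false]) ∨
      (W j = {[true, true]} ∧ ws j = [false, true, true, false]) ∨
      (W j = ({[false, false], [true, true]} : Set (List Bool)) ∧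
        ws j = [false, false, true, true, false])) :
    {p : List Bool | p.length = 2 * k ∧
        IsLenSubseq (List.intercalate [true, false, true] (List.ofFn ws)) p
          (fun i => if i % 2 = 0 then 0 else 3) (fun i => if i % 2 = 0 then 0 else 9) ∧
        ∀ j : Fin k, (p.drop (2 * (j : ℕ))).take 2 ∈
          ({[false, false], [true, true]} : Set (List Bool))} =
      {p : List Bool | ∃ u : Fin k → List Bool,
        (∀ j, u j ∈ W j) ∧ p = (List.ofFn u).flatten} := by
  replace hws : ∀ j, IsGadget (W j) (ws j) := hws
  ext p
  constructor
  · rintro ⟨hlen, hsub, hpairs⟩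
    obtain ⟨f, hf⟩ := IsLenSubseq.exists_isPairEmbedding (lo := 3) (hi := 9) hsub hlen
    exact ⟨fun j => (p.drop (2 * j)).take 2, mem_of_isPairEmbedding hws hf hpairs,
      List.eq_flatten_ofFn_take_drop hlen⟩
  · rintro ⟨u, hu, rfl⟩
    have hlen2 : ∀ j, (u j).length = 2 := fun j => (hws j).length_eq_two_of_mem (hu j)
    have hfac := List.take_drop_flatten_ofFn u hlen2
    have hlen : (List.ofFn u).flatten.length = 2 * k := by
      simp [Function.comp_def, hlen2, mul_comm]
    obtain ⟨f, hf⟩ := exists_isPairEmbedding hws (p := (List.ofFn u).flatten) fun j => by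
      rw [hfac]
      exact hu j
    exact ⟨hlen, hf.isLenSubseq hlen, fun j => by rw [hfac]; exact (hws j).subset (hu j)⟩

/-- Σ = {a, b} is modelled as `Bool` with `a = false`, `b = true`; so `aa = [false,false]`,
`bb = [true,true]`, `abba = [false,true,true,false]`, `aabba = [false,false,true,true,false]`
and the separator `bab = [true,false,true]`. With `w = w_1 bab w_2 bab ⋯ bab w_k` and the
constraints (zero gap inside each pair, gap in `[3,9]` between pairs), the length-`2k`
gc-subsequences `p` of `w` whose consecutive pairs all lie in `{aa, bb}` are exactly the
strings of `W_1 · W_2 ⋯ W_k`. -/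
theorem stmt11 (k : ℕ) (hk : 1 ≤ k)
    (W : Fin k → Set (List Bool)) (ws : Fin k → List Bool)
    (hws : ∀ j,
      (W j = {[false, false]} ∧ ws j = [false, false]) ∨
      (W j = {[true, true]} ∧ ws j = [false, true, true, false]) ∨
      (W j = ({[false, false], [true, true]} : Set (List Bool)) ∧
        ws j = [false, false, true, true, false])) :
    {p : List Bool | p.length = 2 * k ∧
        IsLenSubseq (List.intercalate [true, false, true] (List.ofFn ws)) p
          (fun i => if i % 2 = 0 then 0 else 3) (fun i => if i % 2 = 0 then 0 else 9) ∧
        ∀ j : Fin k, (p.drop (2 * (j : ℕ))).take 2 ∈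
          ({[false, false], [true, true]} : Set (List Bool))} =
      {p : List Bool | ∃ u : Fin k → List Bool,
        (∀ j, u j ∈ W j) ∧ p = (List.ofFn u).flatten} :=
  stmt11_general k W ws hws
end

section
/- Let w be a word over alphabet Σ, k ∈ ℕ, and gc = (C_1,…,C_{k-1}) a tuple of gap constraints each of which is a decidable language. Construct the NFA A with states Q = {(0,0)} ∪ {(i,j) : 1 ≤ i ≤ |w|, 1 ≤ j ≤ k}, initial state (0,0), accepting states {(i,k) : i ≥ k}, and transitions δ((i,j), a) ∋ (i', j+1) whenever i' > i, w[i'] = a, and w[i+1..i'-1] ∈ C_j (with the convention C_0 = Σ* for transitions from (0,0), where w[1..i'-1] is unconstrained—i.e., transitions from (0,0) on letter a go to all (i',1) with w[i'] = a). Then for every string p ∈ Σ^k, the number of distinct accepting paths of A labelled p equals the number of distinct embeddings e : [k] → [|w|] satisfying gc with p = w[e(1)]…w[e(k)]. -/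
/-!
Along an accepting path the second coordinate of the `t`-th state is forced to be `t`, and the
first coordinates after the initial state form a strictly increasing sequence `e` of positions.
The transition conditions at step `t` are exactly the embedding conditions at `e t`: the letter
read is `w[e t]`, and the factor between consecutive positions is the gap checked against `C`.
So dropping the initial state and the second coordinates is a bijection from accepting paths
onto gap-constrained embeddings.
-/

lemma Fin.val_add_apply_zero_le_of_strictMono {n : ℕ} {f : Fin (n + 1) → ℕ} (hf : StrictMono f)
    (i : Fin (n + 1)) : (i : ℕ) + f 0 ≤ f i := by
  induction i using Fin.induction with
  | zero => simp
  | succ i ih =>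
    have := hf (Fin.castSucc_lt_succ (i := i))
    simp only [Fin.val_succ, Fin.val_castSucc] at ih ⊢
    omega

section

variable {α : Type*} (w p : List α) (k : ℕ) (C : ℕ → Set (List α))

def IsAcceptingPath (P : Fin (k + 1) → ℕ × ℕ) : Prop :=
  P 0 = (0, 0) ∧
  (∀ t : Fin k,
    (P t.castSucc).1 < (P t.succ).1 ∧
    (P t.succ).2 = (P t.castSucc).2 + 1 ∧
    w[(P t.succ).1 - 1]? = p[(t : ℕ)]? ∧
    ((t : ℕ) ≠ 0 →
      (w.drop (P t.castSucc).1).take ((P t.succ).1 - (P t.castSucc).1 - 1)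
        ∈ C (P t.castSucc).2)) ∧
  (P (Fin.last k)).2 = k ∧ k ≤ (P (Fin.last k)).1

def IsGapEmbedding (e : Fin k → ℕ) : Prop :=
  (∀ s t : Fin k, s < t → e s < e t) ∧
  (∀ t : Fin k, 1 ≤ e t ∧ e t ≤ w.length) ∧
  (∀ t : Fin k, w[e t - 1]? = p[(t : ℕ)]?) ∧
  (∀ t : Fin k, ∀ h : (t : ℕ) + 1 < k,
    (w.drop (e t)).take (e ⟨(t : ℕ) + 1, h⟩ - e t - 1) ∈ C ((t : ℕ) + 1))

variable {w p k C}

def pathOfEmbedding (e : Fin k → ℕ) (i : Fin (k + 1)) : ℕ × ℕ :=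
  ((Fin.cons 0 e : Fin (k + 1) → ℕ) i, i)

def embeddingOfPath (P : Fin (k + 1) → ℕ × ℕ) (t : Fin k) : ℕ :=
  (P t.succ).1

@[simp]
lemma pathOfEmbedding_succ (e : Fin k → ℕ) (t : Fin k) :
    pathOfEmbedding e t.succ = (e t, (t : ℕ) + 1) := by
  simp [pathOfEmbedding]

@[simp]
lemma embeddingOfPath_pathOfEmbedding (e : Fin k → ℕ) : embeddingOfPath (pathOfEmbedding e) = e :=
  funext fun t => by simp [embeddingOfPath]

namespace IsAcceptingPath

variable {P : Fin (k + 1) → ℕ × ℕ}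

lemma snd_eq (hP : IsAcceptingPath w p k C P) (i : Fin (k + 1)) : (P i).2 = i := by
  induction i using Fin.induction with
  | zero => simp [hP.1]
  | succ t ih => simp [(hP.2.1 t).2.1, ih]

lemma strictMono_fst (hP : IsAcceptingPath w p k C P) : StrictMono fun i => (P i).1 :=
  Fin.strictMono_iff_lt_succ.2 fun t => (hP.2.1 t).1

lemma isGapEmbedding (hp : k ≤ p.length) (hP : IsAcceptingPath w p k C P) :
    IsGapEmbedding w p k C (embeddingOfPath P) := by
  have hmono := hP.strictMono_fst
  have hstep := hP.2.1
  refine ⟨fun s t hst => hmono (Fin.succ_lt_succ_iff.2 hst), fun t => ⟨?_, ?_⟩,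
    fun t => (hstep t).2.2.1, fun t h => ?_⟩ <;> simp only [embeddingOfPath]
  · simpa [hP.1, Nat.one_le_iff_ne_zero, Nat.pos_iff_ne_zero] using hmono (Fin.succ_pos t)
  · -- the letter `p[t]` exists, so the position read lies inside `w`
    have hletter := (hstep t).2.2.1
    rw [List.getElem?_eq_getElem (by omega : (t : ℕ) < p.length)] at hletter
    have := (List.getElem?_eq_some_iff.1 hletter).1
    omega
  · have hgap := (hstep ⟨t + 1, h⟩).2.2.2 (by simp)
    rw [show (⟨t + 1, h⟩ : Fin k).castSucc = t.succ from rfl, hP.snd_eq] at hgap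
    simpa using hgap

end IsAcceptingPath

lemma IsGapEmbedding.isAcceptingPath {e : Fin k → ℕ} (he : IsGapEmbedding w p k C e) :
    IsAcceptingPath w p k C (pathOfEmbedding e) := by
  have hmono : StrictMono (Fin.cons 0 e : Fin (k + 1) → ℕ) :=
    Fin.strictMono_cons.2 ⟨fun t => (he.2.1 t).1, fun s t hst => he.1 s t hst⟩
  refine ⟨rfl, fun t => ⟨hmono Fin.castSucc_lt_succ, by simp [pathOfEmbedding], ?_, ?_⟩, ?_, ?_⟩
  · simpa using he.2.2.1 t
  · obtain ⟨_ | s, ht⟩ := t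
    · simp
    intro _
    rw [show (⟨s + 1, ht⟩ : Fin k).castSucc = (⟨s, by omega⟩ : Fin k).succ from rfl,
      pathOfEmbedding_succ, pathOfEmbedding_succ]
    exact he.2.2.2 ⟨s, by omega⟩ ht
  · simp [pathOfEmbedding]
  · exact Fin.val_add_apply_zero_le_of_strictMono hmono (Fin.last k)

lemma injOn_embeddingOfPath :
    Set.InjOn embeddingOfPath {P : Fin (k + 1) → ℕ × ℕ | IsAcceptingPath w p k C P} := by
  intro P hP Q hQ hPQ
  funext i
  induction i using Fin.cases with
  | zero => rw [hP.1, hQ.1]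
  | succ t => exact Prod.ext (congrFun hPQ t) (by rw [hP.snd_eq, hQ.snd_eq])

lemma image_embeddingOfPath (hp : k ≤ p.length) :
    embeddingOfPath '' {P | IsAcceptingPath w p k C P} = {e | IsGapEmbedding w p k C e} := by
  refine Set.Subset.antisymm ?_ fun e he => ⟨pathOfEmbedding e, he.isAcceptingPath, by simp⟩
  rintro _ ⟨P, hP, rfl⟩
  exact hP.isGapEmbedding hp

theorem ncard_setOf_isAcceptingPath (hp : k ≤ p.length) :
    {P | IsAcceptingPath w p k C P}.ncard = {e | IsGapEmbedding w p k C e}.ncard := by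
  rw [← image_embeddingOfPath hp, injOn_embeddingOfPath.ncard_image]

end

/-- Positions in `w` are 1-indexed (so letter at position `i` is `w[i-1]?`). States of the
NFA are pairs `(i, j)` (position in `w`, position in `p`), the initial state is `(0,0)`,
and accepting states are `(i, k)` with `i ≥ k`. A transition on letter `a` from `(i, j)`
goes to `(i', j+1)` whenever `i' > i`, `w[i'] = a`, and the factor `w[i+1..i'-1]` lies in
`C j` (transitions out of the initial state `(0,0)` are unconstrained). The number of
accepting paths labelled `p` equals the number of embeddings of `p` into `w` (1-indexed,
strictly increasing, letter matching) satisfying the gap constraints `C`. -/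
theorem stmt12 {α : Type*} (w p : List α) (k : ℕ) (C : ℕ → Set (List α))
    (hp : p.length = k) :
    Set.ncard {P : Fin (k + 1) → ℕ × ℕ |
        P 0 = (0, 0) ∧
        (∀ t : Fin k,
          (P t.castSucc).1 < (P t.succ).1 ∧
          (P t.succ).2 = (P t.castSucc).2 + 1 ∧
          w[(P t.succ).1 - 1]? = p[(t : ℕ)]? ∧
          ((t : ℕ) ≠ 0 →
            (w.drop (P t.castSucc).1).take ((P t.succ).1 - (P t.castSucc).1 - 1)
              ∈ C (P t.castSucc).2)) ∧
        (P (Fin.last k)).2 = k ∧ k ≤ (P (Fin.last k)).1} =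
      Set.ncard {e : Fin k → ℕ |
        (∀ s t : Fin k, s < t → e s < e t) ∧
        (∀ t : Fin k, 1 ≤ e t ∧ e t ≤ w.length) ∧
        (∀ t : Fin k, w[e t - 1]? = p[(t : ℕ)]?) ∧
        (∀ t : Fin k, ∀ h : (t : ℕ) + 1 < k,
          (w.drop (e t)).take (e ⟨(t : ℕ) + 1, h⟩ - e t - 1) ∈ C ((t : ℕ) + 1))} :=
  ncard_setOf_isAcceptingPath hp.ge
end

section
/- Let Σ = {0,1,#}, and consider the reduction K(W_1,…,W_q) = T #^{3m} S(W_1) #^{3m} ⋯ #^{3m} S(W_q) over Γ = {b_1,…,b_m} ⊆ Σ \ {#}, with gc the (k-1)-tuple of length constraints (m−1, 3m−1), where S(W_i) and T are as defined (S(W_i) = w_{i,1} #^{m-1} ⋯ #^{m-1} w_{i,k} with alph(w_{i,j}) = W_{i,j}, and T the # -universal gadget satisfying SubSeq_gc(T) = {p ∈ Σ^k : |p|_# ≥ 1}). Then SubSeq_gc(K(W_1,…,W_q)) = Σ^k if and only if ⋃_{i∈[q]} W_{i,1}·W_{i,2}⋯W_{i,k} = Γ^k. -/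
theorem List.infix_intercalate_of_mem {α : Type*} (sep : List α) {l : List α} :
    ∀ {L : List (List α)}, l ∈ L → l <:+: sep.intercalate L
  | [_], h => by rw [List.mem_singleton.1 h, List.intercalate_singleton]
  | _ :: _ :: _, h => by
    rw [List.intercalate_cons_cons, List.append_assoc]
    rcases List.mem_cons.1 h with rfl | h
    · exact (List.prefix_append _ _).isInfix
    · exact (infix_intercalate_of_mem sep h).trans
        ((List.suffix_append sep _).trans (List.suffix_append _ _)).isInfix

theorem List.exists_eq_ofFn_some {α : Type*} {k : ℕ} {p : List (Option α)}
    (hp : p.length = k) (h : none ∉ p) : ∃ u : Fin k → α, p = List.ofFn fun j => some (u j) := by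
  subst hp
  refine ⟨fun j => p[j].get (Option.isSome_iff_ne_none.2 fun hj => h (hj ▸ p.getElem_mem _)), ?_⟩
  conv_lhs => rw [← List.ofFn_getElem (xs := p)]
  simp

theorem List.ofFn_some_injective {α : Type*} {k : ℕ} :
    Function.Injective fun u : Fin k → α => List.ofFn fun j => some (u j) :=
  fun _ _ h => funext fun j => Option.some_injective _ (congrFun (List.ofFn_injective h) j)

theorem IsLenSubseq.of_infix {α : Type*} {v w p : List α} {lo hi : ℕ → ℕ}
    (h : IsLenSubseq v p lo hi) (hvw : v <:+: w) : IsLenSubseq w p lo hi := by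
  obtain ⟨a, b, rfl⟩ := hvw
  obtain ⟨e, hmono, hlt, hget, hgap⟩ := h
  refine ⟨fun i => a.length + e i, fun i j hij hj => by simpa using hmono i j hij hj,
    fun i hi => ?_, fun i hi => ?_, fun i hi => ?_⟩
  · simp only [List.length_append]
    have := hlt i hi
    omega
  · rw [List.append_assoc, List.getElem?_append_right (Nat.le_add_right _ _),
      Nat.add_sub_cancel_left, List.getElem?_append_left (hlt i hi), hget i hi]
  · have := hgap i hi
    dsimp only
    omega

section Cover

variable {α : Type*} {k q : ℕ} {lo hi : ℕ → ℕ} {W : Fin q → Fin k → Set α}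
  {T K : List (Option α)} {S : Fin q → List (Option α)}

theorem forall_isLenSubseq_iff_forall_exists_mem
    (hT : ∀ p : List (Option α), p.length = k → (IsLenSubseq T p lo hi ↔ none ∈ p))
    (hS : ∀ i (u : Fin k → α),
      IsLenSubseq (S i) (List.ofFn fun j => some (u j)) lo hi ↔ ∀ j, u j ∈ W i j)
    (hTK : T <:+: K) (hSK : ∀ i, S i <:+: K)
    (hdec : ∀ p : List (Option α), p.length = k → IsLenSubseq K p lo hi →
      IsLenSubseq T p lo hi ∨ ∃ i, IsLenSubseq (S i) p lo hi) :
    (∀ p : List (Option α), p.length = k → IsLenSubseq K p lo hi) ↔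
      ∀ u : Fin k → α, ∃ i, ∀ j, u j ∈ W i j := by
  constructor
  · intro hK u
    have hu : (List.ofFn fun j => some (u j)).length = k := List.length_ofFn
    have hnone : none ∉ List.ofFn fun j => some (u j) := by simp [List.mem_ofFn]
    rcases hdec _ hu (hK _ hu) with hTu | ⟨i, hSu⟩
    · exact absurd ((hT _ hu).1 hTu) hnone
    · exact ⟨i, (hS i u).1 hSu⟩
  · intro hW p hp
    by_cases hnone : none ∈ p
    · exact ((hT p hp).2 hnone).of_infix hTK
    · obtain ⟨u, rfl⟩ := List.exists_eq_ofFn_some hp hnone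
      obtain ⟨i, hi⟩ := hW u
      exact ((hS i u).2 hi).of_infix (hSK i)

end Cover

/-- Γ is modelled as `Fin m` and Σ = Γ ∪ {#} as `Option (Fin m)`, with `#` = `none`. -/
theorem stmt18_general (m k q : ℕ)
    (W : Fin q → Fin k → Set (Fin m))
    (T : List (Option (Fin m))) (S : Fin q → List (Option (Fin m)))
    (hT : {p : List (Option (Fin m)) | p.length = k ∧
          IsLenSubseq T p (fun _ => m - 1) (fun _ => 3 * m - 1)} =
        {p : List (Option (Fin m)) | p.length = k ∧ (none : Option (Fin m)) ∈ p})
    (hS : ∀ i, {p : List (Option (Fin m)) | p.length = k ∧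
          IsLenSubseq (S i) p (fun _ => m - 1) (fun _ => 3 * m - 1) ∧
          (none : Option (Fin m)) ∉ p} =
        {p : List (Option (Fin m)) | ∃ u : Fin k → Fin m,
          p = List.ofFn (fun j => some (u j)) ∧ ∀ j, u j ∈ W i j})
    (hdec : ∀ p : List (Option (Fin m)), p.length = k →
      IsLenSubseq
        (List.intercalate (List.replicate (3 * m) (none : Option (Fin m)))
          (T :: List.ofFn S)) p (fun _ => m - 1) (fun _ => 3 * m - 1) →
      IsLenSubseq T p (fun _ => m - 1) (fun _ => 3 * m - 1) ∨
        ∃ i, IsLenSubseq (S i) p (fun _ => m - 1) (fun _ => 3 * m - 1)) :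
    ({p : List (Option (Fin m)) | p.length = k ∧
        IsLenSubseq
          (List.intercalate (List.replicate (3 * m) (none : Option (Fin m)))
            (T :: List.ofFn S)) p (fun _ => m - 1) (fun _ => 3 * m - 1)} =
      {p : List (Option (Fin m)) | p.length = k}) ↔
      (⋃ i : Fin q, {u : Fin k → Fin m | ∀ j, u j ∈ W i j}) = Set.univ := by
  have hT' : ∀ p : List (Option (Fin m)), p.length = k →
      (IsLenSubseq T p (fun _ => m - 1) (fun _ => 3 * m - 1) ↔ none ∈ p) := fun p hp => by
    simpa [hp] using Set.ext_iff.1 hT p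
  have hS' : ∀ i (u : Fin k → Fin m),
      IsLenSubseq (S i) (List.ofFn fun j => some (u j)) (fun _ => m - 1) (fun _ => 3 * m - 1) ↔
        ∀ j, u j ∈ W i j := fun i u => by
    simpa [List.mem_ofFn, List.ofFn_some_injective.eq_iff] using
      Set.ext_iff.1 (hS i) (List.ofFn fun j => some (u j))
  simp only [Set.ext_iff, Set.mem_ofPred_eq, and_iff_left_iff_imp, Set.mem_univ, iff_true,
    Set.mem_iUnion]
  exact forall_isLenSubseq_iff_forall_exists_mem hT' hS'
    (List.infix_intercalate_of_mem _ List.mem_cons_self)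
    (fun i => List.infix_intercalate_of_mem _ (List.mem_cons_of_mem _ (List.mem_ofFn.2 ⟨i, rfl⟩)))
    hdec

/-- Γ is modelled as `Fin m` and Σ = Γ ∪ {#} as `Option (Fin m)` with `#` = `none`; all
length constraints are `(m-1, 3m-1)`. Let `K = T #^{3m} S(W_1) #^{3m} ⋯ #^{3m} S(W_q)`.
Assuming the auxiliary facts (◇) the gc-subsequences of `T` are exactly the length-`k`
strings containing `#`, (†) the gc-subsequences of `S(W_i)` without `#` are exactly
`W_{i,1} ⋯ W_{i,k}`, and the decomposition fact that any gc-subsequence of `K` is already a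
gc-subsequence of `T` or of some `S(W_i)`, we have: `K` is gc-universal iff
`⋃_i W_{i,1} · W_{i,2} ⋯ W_{i,k} = Γ^k`. -/
theorem stmt18 (m k q : ℕ) (hm : 1 ≤ m) (hk : 1 ≤ k)
    (W : Fin q → Fin k → Set (Fin m))
    (T : List (Option (Fin m))) (S : Fin q → List (Option (Fin m)))
    (hT : {p : List (Option (Fin m)) | p.length = k ∧
          IsLenSubseq T p (fun _ => m - 1) (fun _ => 3 * m - 1)} =
        {p : List (Option (Fin m)) | p.length = k ∧ (none : Option (Fin m)) ∈ p})
    (hS : ∀ i, {p : List (Option (Fin m)) | p.length = k ∧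
          IsLenSubseq (S i) p (fun _ => m - 1) (fun _ => 3 * m - 1) ∧
          (none : Option (Fin m)) ∉ p} =
        {p : List (Option (Fin m)) | ∃ u : Fin k → Fin m,
          p = List.ofFn (fun j => some (u j)) ∧ ∀ j, u j ∈ W i j})
    (hdec : ∀ p : List (Option (Fin m)), p.length = k →
      IsLenSubseq
        (List.intercalate (List.replicate (3 * m) (none : Option (Fin m)))
          (T :: List.ofFn S)) p (fun _ => m - 1) (fun _ => 3 * m - 1) →
      IsLenSubseq T p (fun _ => m - 1) (fun _ => 3 * m - 1) ∨
        ∃ i, IsLenSubseq (S i) p (fun _ => m - 1) (fun _ => 3 * m - 1)) :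
    ({p : List (Option (Fin m)) | p.length = k ∧
        IsLenSubseq
          (List.intercalate (List.replicate (3 * m) (none : Option (Fin m)))
            (T :: List.ofFn S)) p (fun _ => m - 1) (fun _ => 3 * m - 1)} =
      {p : List (Option (Fin m)) | p.length = k}) ↔
      (⋃ i : Fin q, {u : Fin k → Fin m | ∀ j, u j ∈ W i j}) = Set.univ :=
  stmt18_general m k q W T S hT hS hdec
end
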